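/- Let u, x : Fin m → K be linearly independent over K with F(u) = 0 and F(x) = 0, and assume the line through [u] and [x] is not contained in the cubic X = {F = 0}, i.e. there exist s, t ∈ K with F(s•u + t•x) ≠ 0. Set y := (∇F(x)·u) • u − (∇F(u)·x) • x. Then: (a) there exists c ∈ K, c ≠ 0, with y = c • x if and only if ∇F(x)·u = 0; and (b) there exists c ∈ K, c ≠ 0, with y = c • u if and only if ∇F(u)·x = 0. (Lemma 3.5 and Corollary 3.6(a) of the paper: τ_u fixes [x] exactly when [u] ∈ 𝕋_{[x]}X, and τ_u contracts the hyperplane section S_u = 𝕋_{[u]}X ∩ X minus C_u to the point [u].) -/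

import Mathlib

/-!
On the line through `u` and `x` a cubic form restricts to the binary cubic
`F(s•u + t•x) = s³ F(u) + s²t ∇F(u)·x + st² ∇F(x)·u + t³ F(x)`: the two lowest coefficients of
`t ↦ F(u + t•x)` are `F(u)` and `∇F(u)·x` by the chain rule, and homogeneity reverses this
polynomial into `t ↦ F(x + t•u)`, which yields the two top ones. When `F(u) = F(x) = 0` and the
line is not contained in the cubic, `∇F(x)·u` and `∇F(u)·x` therefore do not both vanish, and both
claims follow by comparing coefficients in the basis `u, x`.
-/

open Polynomial

namespace MvPolynomial

variable {R σ : Type*} [CommSemiring R]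

theorem IsHomogeneous.eval_smul {F : MvPolynomial σ R} {n : ℕ} (hF : F.IsHomogeneous n)
    (s : R) (v : σ → R) : eval (s • v) F = s ^ n * eval v F := by
  rw [eval_eq, eval_eq, Finset.mul_sum]
  refine Finset.sum_congr rfl fun d hd => ?_
  have hdeg : ∑ i ∈ d.support, d i = n := by
    simpa [Finsupp.weight_apply, Finsupp.sum] using hF (mem_support_iff.mp hd)
  simp only [Pi.smul_apply, smul_eq_mul, mul_pow, Finset.prod_mul_distrib,
    Finset.prod_pow_eq_pow_sum, hdeg]
  ring

theorem derivative_aeval [Fintype σ] (g : σ → R[X]) (F : MvPolynomial σ R) :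
    derivative (aeval g F) = ∑ i, aeval g (pderiv i F) * derivative (g i) := by
  induction F using MvPolynomial.induction_on with
  | C a => simp
  | add p q hp hq => simp [hp, hq, Finset.sum_add_distrib, add_mul]
  | mul_X p j ih =>
    classical
    simp [ih, pderiv_X, Pi.single_apply, apply_ite, ite_mul, Finset.mul_sum, add_mul,
      Finset.sum_add_distrib, mul_assoc, mul_comm]

noncomputable def lineRestrict (v w : σ → R) (F : MvPolynomial σ R) : R[X] :=
  aeval (fun i => Polynomial.C (v i) + Polynomial.C (w i) * Polynomial.X) F

variable (v w : σ → R) (F : MvPolynomial σ R)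

theorem eval_lineRestrict (t : R) : (lineRestrict v w F).eval t = eval (v + t • w) F := by
  rw [lineRestrict, ← Polynomial.coe_aeval_eq_eval, ← AlgHom.comp_apply, comp_aeval,
    ← aeval_eq_eval]
  refine congrArg (aeval · F) ?_
  ext i
  simp only [map_add, map_mul, Polynomial.aeval_C, Polynomial.aeval_X, Pi.add_apply,
    Pi.smul_apply, smul_eq_mul, Algebra.algebraMap_self, RingHom.id_apply]
  ring

theorem coeff_zero_lineRestrict : (lineRestrict v w F).coeff 0 = eval v F := by
  simp [coeff_zero_eq_eval_zero, eval_lineRestrict]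

theorem coeff_one_lineRestrict [Fintype σ] :
    (lineRestrict v w F).coeff 1 = ∑ i, eval v (pderiv i F) * w i := by
  have h : (lineRestrict v w F).coeff 1 = (derivative (lineRestrict v w F)).coeff 0 := by
    simp [coeff_derivative]
  rw [h, lineRestrict, derivative_aeval, finsetSum_coeff]
  refine Finset.sum_congr rfl fun i _ => ?_
  rw [derivative_add, derivative_C, derivative_C_mul_X, zero_add, coeff_mul_C]
  exact congrArg (· * w i) (coeff_zero_lineRestrict v w _)

theorem natDegree_lineRestrict_le {n : ℕ} (hF : F.IsHomogeneous n) :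
    (lineRestrict v w F).natDegree ≤ n := by
  simpa [lineRestrict] using aeval_natDegree_le (n := 1) F hF.totalDegree_le _ fun i => by
    rw [add_comm]; exact natDegree_linear_le

-- `F(x + t•u) = tⁿ F(u + t⁻¹•x)` for `t ≠ 0`.
theorem lineRestrict_swap {K : Type*} [Field K] [Infinite K] {F : MvPolynomial σ K} {n : ℕ}
    (hF : F.IsHomogeneous n) (u x : σ → K) :
    lineRestrict x u F = reflect n (lineRestrict u x F) := by
  refine eq_of_infinite_eval_eq _ _ ((Set.finite_singleton 0).infinite_compl.mono fun t ht => ?_)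
  replace ht : t ≠ 0 := ht
  let := invertibleOfNonzero (inv_ne_zero ht)
  have hreflect := eval₂_reflect_mul_pow (RingHom.id K) t⁻¹ n _ (natDegree_lineRestrict_le u x F hF)
  rw [invOf_eq_inv, inv_inv, Polynomial.eval₂_id, Polynomial.eval₂_id, eval_lineRestrict] at hreflect
  have hline : x + t • u = t • (u + t⁻¹ • x) := by
    rw [smul_add, smul_smul, mul_inv_cancel₀ ht, one_smul, add_comm]
  rw [Set.mem_ofPred_eq, eval_lineRestrict, hline, hF.eval_smul, ← hreflect, mul_left_comm, ← mul_pow, mul_inv_cancel₀ ht, one_pow, mul_one]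

variable {K : Type*} [Field K] [Infinite K] [Fintype σ] {F : MvPolynomial σ K}

theorem IsHomogeneous.eval_add_smul_of_three (hF : F.IsHomogeneous 3) (u x : σ → K) (t : K) :
    eval (u + t • x) F = eval u F + (∑ i, eval u (pderiv i F) * x i) * t +
      (∑ i, eval x (pderiv i F) * u i) * t ^ 2 + eval x F * t ^ 3 := by
  have hcoeff {k : ℕ} (hk : k ≤ 3) :
      (lineRestrict u x F).coeff k = (lineRestrict x u F).coeff (3 - k) := by
    rw [lineRestrict_swap hF x u, coeff_reflect, revAt_le hk]
  rw [← eval_lineRestrict, eval_eq_sum_range' (n := 4)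
    (Nat.lt_succ_of_le (natDegree_lineRestrict_le u x F hF))]
  simp only [Finset.sum_range_succ, Finset.sum_range_zero, zero_add, pow_zero, mul_one, pow_one,
    coeff_zero_lineRestrict, coeff_one_lineRestrict, hcoeff (k := 2) (by norm_num),
    hcoeff (k := 3) le_rfl, Nat.reduceSub]

theorem IsHomogeneous.eval_smul_add_smul_of_three (hF : F.IsHomogeneous 3) (u x : σ → K)
    (s t : K) :
    eval (s • u + t • x) F = s ^ 3 * eval u F + s ^ 2 * t * (∑ i, eval u (pderiv i F) * x i) +
      s * t ^ 2 * (∑ i, eval x (pderiv i F) * u i) + t ^ 3 * eval x F := by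
  rcases eq_or_ne s 0 with rfl | hs
  · simp [hF.eval_smul]
  · have hline : s • u + t • x = s • (u + (t / s) • x) := by
      rw [smul_add, smul_smul, mul_div_cancel₀ t hs]
    rw [hline, hF.eval_smul, hF.eval_add_smul_of_three]
    field_simp

end MvPolynomial

namespace LinearIndependent

variable {R M : Type*} [Ring R] [AddCommGroup M] [Module R M] {u x : M}

theorem exists_ne_zero_sub_eq_smul_right_iff (hind : LinearIndependent R ![u, x]) (a b : R) :
    (∃ c : R, c ≠ 0 ∧ a • u - b • x = c • x) ↔ a = 0 ∧ b ≠ 0 := by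
  constructor
  · rintro ⟨c, hc, h⟩
    obtain ⟨ha, hbc⟩ := pair_iff.mp hind a (-b - c) (by rw [sub_smul, neg_smul, ← h]; abel)
    exact ⟨ha, fun hb => hc (by simpa [hb] using hbc)⟩
  · rintro ⟨rfl, hb⟩
    exact ⟨-b, neg_ne_zero.mpr hb, by rw [zero_smul, zero_sub, neg_smul]⟩

theorem exists_ne_zero_sub_eq_smul_left_iff (hind : LinearIndependent R ![u, x]) (a b : R) :
    (∃ c : R, c ≠ 0 ∧ a • u - b • x = c • u) ↔ b = 0 ∧ a ≠ 0 := by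
  constructor
  · rintro ⟨c, hc, h⟩
    obtain ⟨hac, hb⟩ := pair_iff.mp hind (a - c) (-b) (by rw [sub_smul, neg_smul, ← h]; abel)
    exact ⟨neg_eq_zero.mp hb, fun ha => hc (by simpa [ha] using hac)⟩
  · rintro ⟨rfl, ha⟩
    exact ⟨a, ha, by rw [zero_smul, sub_zero]⟩

end LinearIndependent

theorem tau_u_fixed_points_general {K : Type*} [Field K] [CharZero K] {m : ℕ}
    (F : MvPolynomial (Fin m) K) (hF : F.IsHomogeneous 3)
    (u x : Fin m → K)
    (hind : LinearIndependent K ![u, x])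
    (hu : MvPolynomial.eval u F = 0) (hx : MvPolynomial.eval x F = 0)
    (hline : ∃ s t : K, MvPolynomial.eval (s • u + t • x) F ≠ 0) :
    ((∃ c : K, c ≠ 0 ∧
        (∑ i, MvPolynomial.eval x (MvPolynomial.pderiv i F) * u i) • u -
          (∑ i, MvPolynomial.eval u (MvPolynomial.pderiv i F) * x i) • x = c • x) ↔
      (∑ i, MvPolynomial.eval x (MvPolynomial.pderiv i F) * u i) = 0) ∧
    ((∃ c : K, c ≠ 0 ∧
        (∑ i, MvPolynomial.eval x (MvPolynomial.pderiv i F) * u i) • u -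
          (∑ i, MvPolynomial.eval u (MvPolynomial.pderiv i F) * x i) • x = c • u) ↔
      (∑ i, MvPolynomial.eval u (MvPolynomial.pderiv i F) * x i) = 0) := by
  rw [hind.exists_ne_zero_sub_eq_smul_right_iff, hind.exists_ne_zero_sub_eq_smul_left_iff]
  obtain ⟨s, t, hst⟩ := hline
  rw [hF.eval_smul_add_smul_of_three, hu, hx] at hst
  set A := ∑ i, MvPolynomial.eval x (MvPolynomial.pderiv i F) * u i
  set B := ∑ i, MvPolynomial.eval u (MvPolynomial.pderiv i F) * x i
  have hAB : A ≠ 0 ∨ B ≠ 0 := by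
    by_contra! h
    simp [h.1, h.2] at hst
  tauto

/-- Fixed points and contraction of `τ_u`: with `y := (∇F(x)·u) • u − (∇F(u)·x) • x`,
(a) `y` is a nonzero multiple of `x` iff `∇F(x)·u = 0`, and
(b) `y` is a nonzero multiple of `u` iff `∇F(u)·x = 0`,
provided `u, x` are linearly independent and the line through them is not in the cubic. -/
theorem tau_u_fixed_points {K : Type*} [Field K] [CharZero K] {m : ℕ} (hm : 1 ≤ m)
    (F : MvPolynomial (Fin m) K) (hF : F.IsHomogeneous 3)
    (u x : Fin m → K)
    (hind : LinearIndependent K ![u, x])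
    (hu : MvPolynomial.eval u F = 0) (hx : MvPolynomial.eval x F = 0)
    (hline : ∃ s t : K, MvPolynomial.eval (s • u + t • x) F ≠ 0) :
    ((∃ c : K, c ≠ 0 ∧
        (∑ i, MvPolynomial.eval x (MvPolynomial.pderiv i F) * u i) • u -
          (∑ i, MvPolynomial.eval u (MvPolynomial.pderiv i F) * x i) • x = c • x) ↔
      (∑ i, MvPolynomial.eval x (MvPolynomial.pderiv i F) * u i) = 0) ∧
    ((∃ c : K, c ≠ 0 ∧
        (∑ i, MvPolynomial.eval x (MvPolynomial.pderiv i F) * u i) • u -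
          (∑ i, MvPolynomial.eval u (MvPolynomial.pderiv i F) * x i) • x = c • u) ↔
      (∑ i, MvPolynomial.eval u (MvPolynomial.pderiv i F) * x i) = 0) :=
  tau_u_fixed_points_general F hF u x hind hu hx hline
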